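/- arXiv:1701.04474 — 8 statements merged into one kernel-verified Lean document; each statement's English description precedes it below -/
import Mathlib

section
/- Let U be an ℓ×ℓ complex unitary matrix with spectral decomposition U = Σ_{r=1}^m λ_r F_r. Then for every ℓ×ℓ complex matrix ρ, the Cesàro averages (1/K) Σ_{k=0}^{K-1} (U^k)* ρ U^k converge entrywise, as K → ∞, to Σ_{r=1}^m F_r ρ F_r. -/
open Matrix Filter Finset Topology

/-!
Since the `F r` are complete orthogonal idempotents, `U ^ k = ∑ r, λ_r ^ k • F r`, hence
`(U ^ k)ᴴ ρ U ^ k = ∑ r s, (conj λ_r * λ_s) ^ k • F r ρ F s`. Each `μ = conj λ_r * λ_s` has modulus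
one, so by the geometric sum formula the Cesàro mean of `μ ^ k` is `1` if `μ = 1` and `O(1/K)`
otherwise; as the `λ_r` are distinct and unimodular, `μ = 1` exactly when `r = s`.
-/

section Cesaro

variable {𝕜 : Type*} [RCLike 𝕜]

lemma norm_cesaro_geom_sum_le {μ : 𝕜} (hμ : ‖μ‖ ≤ 1) (h1 : μ ≠ 1) (K : ℕ) :
    ‖(K : 𝕜)⁻¹ * ∑ k ∈ range K, μ ^ k‖ ≤ 2 / ‖μ - 1‖ * (K : ℝ)⁻¹ := by
  have hnum : ‖μ ^ K - 1‖ ≤ 2 :=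
    calc ‖μ ^ K - 1‖ ≤ ‖μ‖ ^ K + ‖(1 : 𝕜)‖ := (norm_sub_le _ _).trans_eq (by rw [norm_pow])
      _ ≤ 1 + 1 := by gcongr; exacts [pow_le_one₀ (norm_nonneg μ) hμ, norm_one.le]
      _ = 2 := by norm_num
  rw [geom_sum_eq h1, norm_mul, norm_div, norm_inv, RCLike.norm_natCast, mul_comm]
  gcongr

lemma tendsto_cesaro_geom_sum {μ : 𝕜} (hμ : ‖μ‖ ≤ 1) :
    Tendsto (fun K : ℕ => (K : 𝕜)⁻¹ * ∑ k ∈ range K, μ ^ k) atTop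
      (𝓝 (if μ = 1 then 1 else 0)) := by
  split_ifs with h1
  · refine tendsto_const_nhds.congr' ?_
    filter_upwards [eventually_ne_atTop 0] with K hK
    simp [h1, hK]
  · refine squeeze_zero_norm (norm_cesaro_geom_sum_le hμ h1) ?_
    simpa using (tendsto_inv_atTop_zero.comp tendsto_natCast_atTop_atTop).const_mul (2 / ‖μ - 1‖)

lemma tendsto_cesaro_sum_pow_smul {ι E : Type*} [Fintype ι] [AddCommMonoid E] [TopologicalSpace E]
    [ContinuousAdd E] [Module 𝕜 E] [ContinuousSMul 𝕜 E] {μ : ι → 𝕜} (hμ : ∀ i, ‖μ i‖ ≤ 1)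
    (x : ι → E) :
    Tendsto (fun K : ℕ => (K : 𝕜)⁻¹ • ∑ k ∈ range K, ∑ i, μ i ^ k • x i) atTop
      (𝓝 (∑ i, if μ i = 1 then x i else 0)) := by
  have hswap : ∀ K : ℕ, (K : 𝕜)⁻¹ • ∑ k ∈ range K, ∑ i, μ i ^ k • x i
      = ∑ i, ((K : 𝕜)⁻¹ * ∑ k ∈ range K, μ i ^ k) • x i := by
    intro K
    simp only [Finset.sum_comm (s := range K), mul_smul, Finset.sum_smul, Finset.smul_sum]
  have hlim : (∑ i, if μ i = 1 then x i else 0) = ∑ i, (if μ i = 1 then (1 : 𝕜) else 0) • x i := by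
    simp only [ite_smul, one_smul, zero_smul]
  simp only [hswap, hlim]
  exact tendsto_finsetSum _ fun i _ => (tendsto_cesaro_geom_sum (hμ i)).smul_const (x i)

lemma star_mul_eq_one_iff_of_norm_eq_one {z w : 𝕜} (hz : ‖z‖ = 1) : star z * w = 1 ↔ w = z := by
  have hzz : star z * z = 1 := by rw [RCLike.star_def, RCLike.conj_mul, hz]; norm_num
  constructor
  · intro hw
    calc w = z * (star z * w) := by rw [← mul_assoc, mul_comm z, hzz, one_mul]
      _ = z := by rw [hw, mul_one]
  · rintro rfl
    exact hzz

end Cesaro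

section Idempotents

variable {ι R A : Type*} [Fintype ι] [CommSemiring R] [Semiring A] [Algebra R A] {e : ι → A}

lemma OrthogonalIdempotents.sum_smul_mul_sum_smul (he : OrthogonalIdempotents e) (a b : ι → R) :
    (∑ i, a i • e i) * (∑ i, b i • e i) = ∑ i, (a i * b i) • e i := by
  classical
  simp only [Finset.sum_mul_sum, smul_mul_smul_comm, he.mul_eq, smul_ite, smul_zero,
    Finset.sum_ite_eq, Finset.mem_univ, if_true]

lemma CompleteOrthogonalIdempotents.sum_smul_pow (he : CompleteOrthogonalIdempotents e)
    (c : ι → R) (k : ℕ) : (∑ i, c i • e i) ^ k = ∑ i, c i ^ k • e i := by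
  induction k with
  | zero => simp [he.complete]
  | succ k ih => simp only [pow_succ, ih, he.sum_smul_mul_sum_smul]

lemma CompleteOrthogonalIdempotents.star_pow_mul_mul_pow [StarRing R] [StarRing A]
    [StarModule R A] (he : CompleteOrthogonalIdempotents e) (hsa : ∀ i, star (e i) = e i)
    (c : ι → R) (x : A) (k : ℕ) :
    star ((∑ i, c i • e i) ^ k) * x * (∑ i, c i • e i) ^ k
      = ∑ i, ∑ j, (star (c i) * c j) ^ k • (e i * x * e j) := by
  rw [he.sum_smul_pow, star_sum, Finset.sum_mul, Finset.sum_mul]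
  simp only [Finset.mul_sum, star_smul, hsa, star_pow, smul_mul_assoc, mul_smul_comm, smul_smul,
    mul_pow, mul_comm]

end Idempotents

theorem cesaro_channel_converges_general (ℓ m : ℕ)
    (U : Matrix (Fin ℓ) (Fin ℓ) ℂ)
    (lam : Fin m → ℂ) (F : Fin m → Matrix (Fin ℓ) (Fin ℓ) ℂ)
    (hdist : Function.Injective lam)
    (hmod : ∀ r, ‖lam r‖ = 1)
    (hherm : ∀ r, (F r)ᴴ = F r)
    (horth : ∀ r s, r ≠ s → F r * F s = 0)
    (hsum : ∑ r, F r = 1)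
    (hspec : U = ∑ r, lam r • F r)
    (ρ : Matrix (Fin ℓ) (Fin ℓ) ℂ) :
    ∀ i j : Fin ℓ,
      Filter.Tendsto
        (fun K : ℕ => (K : ℂ)⁻¹ *
          (∑ k ∈ Finset.range K, (U ^ k)ᴴ * ρ * U ^ k) i j)
        Filter.atTop
        (nhds ((∑ r, F r * ρ * F r) i j)) := by
  intro i j
  have hF : CompleteOrthogonalIdempotents F :=
    CompleteOrthogonalIdempotents.iff_ortho_complete.2 ⟨horth, hsum⟩
  have hterm : ∀ k, (U ^ k)ᴴ * ρ * U ^ k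
      = ∑ p : Fin m × Fin m, (star (lam p.1) * lam p.2) ^ k • (F p.1 * ρ * F p.2) := by
    intro k
    rw [hspec, ← star_eq_conjTranspose, hF.star_pow_mul_mul_pow hherm, ← Fintype.sum_prod_type']
  have hdiag : (∑ p : Fin m × Fin m,
      if star (lam p.1) * lam p.2 = 1 then F p.1 * ρ * F p.2 else 0) = ∑ r, F r * ρ * F r := by
    rw [Fintype.sum_prod_type]
    simp only [star_mul_eq_one_iff_of_norm_eq_one (hmod _), hdist.eq_iff, Finset.sum_ite_eq',
      Finset.mem_univ, if_true]
  have hnorm : ∀ p : Fin m × Fin m, ‖star (lam p.1) * lam p.2‖ ≤ 1 := fun p => by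
    rw [norm_mul, norm_star, hmod, hmod, one_mul]
  have hconv := tendsto_cesaro_sum_pow_smul hnorm fun p => F p.1 * ρ * F p.2
  rw [hdiag] at hconv
  refine (tendsto_pi_nhds.1 (tendsto_pi_nhds.1 hconv i) j).congr fun K => ?_
  simp only [hterm, Matrix.smul_apply, smul_eq_mul]

/-- For a unitary `U` with spectral decomposition `U = ∑ r, λ r • F r`
and any matrix `ρ`, the Cesàro averages `(1/K) ∑_{k<K} (U^k)* ρ U^k` converge
entrywise to `∑ r, F_r ρ F_r`. -/
theorem cesaro_channel_converges (ℓ m : ℕ) (hℓ : 0 < ℓ)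
    (U : Matrix (Fin ℓ) (Fin ℓ) ℂ)
    (hU : U ∈ Matrix.unitaryGroup (Fin ℓ) ℂ)
    (lam : Fin m → ℂ) (F : Fin m → Matrix (Fin ℓ) (Fin ℓ) ℂ)
    (hdist : Function.Injective lam)
    (hmod : ∀ r, ‖lam r‖ = 1)
    (hherm : ∀ r, (F r)ᴴ = F r)
    (hidem : ∀ r, F r * F r = F r)
    (horth : ∀ r s, r ≠ s → F r * F s = 0)
    (hsum : ∑ r, F r = 1)
    (hspec : U = ∑ r, lam r • F r)
    (ρ : Matrix (Fin ℓ) (Fin ℓ) ℂ) :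
    ∀ i j : Fin ℓ,
      Filter.Tendsto
        (fun K : ℕ => (K : ℂ)⁻¹ *
          (∑ k ∈ Finset.range K, (U ^ k)ᴴ * ρ * U ^ k) i j)
        Filter.atTop
        (nhds ((∑ r, F r * ρ * F r) i j)) :=
  cesaro_channel_converges_general ℓ m U lam F hdist hmod hherm horth hsum hspec ρ
end

section
/- Let U be an ℓ×ℓ complex unitary matrix with spectral decomposition U = Σ_{r=1}^m λ_r F_r, and let M̂ = Σ_r F_r ∘ conj(F_r) be its average mixing matrix. Then M̂ has real nonnegative entries, M̂ is symmetric, and M̂ is doubly stochastic: every row sum and every column sum of M̂ equals 1. -/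
/-! The `(i, j)` entry of `M̂` is `∑ r, |F_r i j|²`, which is real, nonnegative and symmetric in
`i, j` because each `F_r` is Hermitian. For a Hermitian `F`, the `i`-th row sum of `F ∘ conj F`
is `∑ j, F i j * F j i = (F * F) i i`, so for idempotents the row sums of `M̂` add up to
`(∑ r, F_r) i i = 1`. -/

open Matrix Finset

/-- The average mixing matrix `M̂ = ∑ r, F_r ∘ conj(F_r)` of a quantum walk with
spectral idempotents `F_r`, where `∘` is the entrywise (Hadamard) product and
`conj` is entrywise complex conjugation. -/
noncomputable def avgMix {ℓ m : ℕ} (F : Fin m → Matrix (Fin ℓ) (Fin ℓ) ℂ) :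
    Matrix (Fin ℓ) (Fin ℓ) ℂ :=
  ∑ r, Matrix.hadamard (F r) ((F r).map (starRingEnd ℂ))

namespace Matrix

variable {n : Type*}

lemma hadamard_map_conj_apply (A : Matrix n n ℂ) (i j : n) :
    (A ⊙ A.map (starRingEnd ℂ)) i j = (Complex.normSq (A i j) : ℂ) :=
  Complex.mul_conj (A i j)

lemma IsHermitian.transpose_hadamard_map_conj {A : Matrix n n ℂ} (hA : A.IsHermitian) :
    (A ⊙ A.map (starRingEnd ℂ))ᵀ = A ⊙ A.map (starRingEnd ℂ) := by
  ext i j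
  rw [transpose_apply, hadamard_map_conj_apply, hadamard_map_conj_apply, ← hA.apply i j]
  exact congrArg _ (Complex.normSq_conj _).symm

lemma IsHermitian.sum_hadamard_map_conj_apply [Fintype n] {A : Matrix n n ℂ}
    (hA : A.IsHermitian) (i : n) :
    ∑ j, (A ⊙ A.map (starRingEnd ℂ)) i j = (A * A) i i := by
  simp only [hadamard_apply, map_apply, mul_apply]
  refine sum_congr rfl fun j _ => ?_
  rw [← hA.apply j i]
  rfl

end Matrix

variable {ℓ m : ℕ}

lemma avgMix_apply (F : Fin m → Matrix (Fin ℓ) (Fin ℓ) ℂ) (i j : Fin ℓ) :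
    avgMix F i j = ((∑ r, Complex.normSq (F r i j) : ℝ) : ℂ) := by
  simp only [avgMix, Matrix.sum_apply, hadamard_map_conj_apply, Complex.ofReal_sum]

lemma avgMix_transpose {F : Fin m → Matrix (Fin ℓ) (Fin ℓ) ℂ} (hF : ∀ r, (F r).IsHermitian) :
    (avgMix F)ᵀ = avgMix F := by
  simp only [avgMix, transpose_sum, fun r => (hF r).transpose_hadamard_map_conj]

lemma avgMix_row_sum {F : Fin m → Matrix (Fin ℓ) (Fin ℓ) ℂ} (hF : ∀ r, (F r).IsHermitian)
    (hidem : ∀ r, F r * F r = F r) (hsum : ∑ r, F r = 1) (i : Fin ℓ) :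
    ∑ j, avgMix F i j = 1 := by
  calc ∑ j, avgMix F i j = ∑ r, ∑ j, (F r ⊙ (F r).map (starRingEnd ℂ)) i j := by
        simp only [avgMix, Matrix.sum_apply]
        exact sum_comm
    _ = (∑ r, F r) i i := by
        simp only [(hF _).sum_hadamard_map_conj_apply, hidem, Matrix.sum_apply]
    _ = 1 := by rw [hsum, one_apply_eq]

theorem avgMix_doubly_stochastic_general (ℓ m : ℕ)
    (F : Fin m → Matrix (Fin ℓ) (Fin ℓ) ℂ)
    (hherm : ∀ r, (F r)ᴴ = F r)
    (hidem : ∀ r, F r * F r = F r)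
    (hsum : ∑ r, F r = 1)
    :
    (∀ i j, (avgMix F i j).im = 0 ∧ 0 ≤ (avgMix F i j).re) ∧
      (avgMix F)ᵀ = avgMix F ∧
      (∀ i, ∑ j, avgMix F i j = 1) ∧
      (∀ j, ∑ i, avgMix F i j = 1) := by
  have hsymm := avgMix_transpose hherm
  have hrow := avgMix_row_sum hherm hidem hsum
  refine ⟨fun i j => ?_, hsymm, hrow, fun j => ?_⟩
  · rw [avgMix_apply, Complex.ofReal_im, Complex.ofReal_re]
    exact ⟨rfl, sum_nonneg fun r _ => Complex.normSq_nonneg _⟩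
  · calc ∑ i, avgMix F i j = ∑ i, (avgMix F)ᵀ j i := rfl
      _ = 1 := by rw [hsymm]; exact hrow j

/-- The average mixing matrix has real nonnegative entries, is symmetric, and is doubly stochastic. -/
theorem avgMix_doubly_stochastic (ℓ m : ℕ) (hℓ : 0 < ℓ)
    (U : Matrix (Fin ℓ) (Fin ℓ) ℂ)
    (hU : U ∈ Matrix.unitaryGroup (Fin ℓ) ℂ)
    (lam : Fin m → ℂ) (F : Fin m → Matrix (Fin ℓ) (Fin ℓ) ℂ)
    (hdist : Function.Injective lam)
    (hmod : ∀ r, ‖lam r‖ = 1)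
    (hherm : ∀ r, (F r)ᴴ = F r)
    (hidem : ∀ r, F r * F r = F r)
    (horth : ∀ r s, r ≠ s → F r * F s = 0)
    (hsum : ∑ r, F r = 1)
    (hspec : U = ∑ r, lam r • F r)
    :
    (∀ i j, (avgMix F i j).im = 0 ∧ 0 ≤ (avgMix F i j).re) ∧
      (avgMix F)ᵀ = avgMix F ∧
      (∀ i, ∑ j, avgMix F i j = 1) ∧
      (∀ j, ∑ i, avgMix F i j = 1) :=
  avgMix_doubly_stochastic_general ℓ m F hherm hidem hsum
end

section
/- Let U be an ℓ×ℓ complex unitary matrix with spectral decomposition U = Σ_{r=1}^m λ_r F_r, and let M̂ = Σ_r F_r ∘ conj(F_r) be its average mixing matrix. Then M̂ is positive semidefinite, I − M̂ is positive semidefinite (so every eigenvalue of M̂ lies in [0,1]), and the all-ones vector is an eigenvector of M̂ with eigenvalue 1. -/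
/-!
Each `F r` is positive semidefinite, hence so is its entrywise conjugate, and by the Schur product
theorem so is every `F r ⊙ conj (F s)`. `M̂` is the sum of the terms with `r = s`; since
`∑ r, ∑ s, F r ⊙ conj (F s) = 1 ⊙ conj 1 = 1`, `1 - M̂` is the sum of those with `r ≠ s`.
The row sums of `F ⊙ conj F` form the diagonal of `F * Fᴴ = F`, and these add up to `diag 1`.
-/

open Matrix Finset
open scoped ComplexOrder

namespace Matrix

variable {ι m n 𝕜 : Type*}

theorem sum_hadamard_sum {α : Type*} [NonUnitalNonAssocSemiring α] (s t : Finset ι)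
    (A B : ι → Matrix m n α) :
    (∑ i ∈ s, A i) ⊙ (∑ j ∈ t, B j) = ∑ i ∈ s, ∑ j ∈ t, A i ⊙ B j := by
  ext k l
  simp [hadamard_apply, sum_apply, Finset.sum_mul_sum]

variable [RCLike 𝕜]

theorem PosSemidef.map_starRingEnd {A : Matrix n n 𝕜} (hA : A.PosSemidef) :
    (A.map (starRingEnd 𝕜)).PosSemidef := by
  have hconj : A.map (starRingEnd 𝕜) = Aᴴᵀ := rfl
  rw [hconj, hA.isHermitian.eq]
  exact hA.transpose

section SumEqOne

variable [DecidableEq n] [Fintype ι] {P : ι → Matrix n n 𝕜}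

theorem sum_sum_hadamard_map_starRingEnd_eq_one (hsum : ∑ i, P i = 1) :
    ∑ i, ∑ j, P i ⊙ (P j).map (starRingEnd 𝕜) = 1 := by
  have hmap : ∑ j, (P j).map (starRingEnd 𝕜) = 1 :=
    calc ∑ j, (P j).map (starRingEnd 𝕜) = (∑ j, P j).map (starRingEnd 𝕜) := by
          ext k l
          simp [sum_apply]
      _ = 1 := by rw [hsum]; exact Matrix.map_one _ (map_zero _) (map_one _)
  rw [← sum_hadamard_sum, hsum, hmap, hadamard_one, diag_one]
  exact diagonal_one

theorem one_sub_sum_hadamard_map_starRingEnd [DecidableEq ι] (hsum : ∑ i, P i = 1) :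
    1 - ∑ i, P i ⊙ (P i).map (starRingEnd 𝕜) =
      ∑ i, ∑ j ∈ univ.erase i, P i ⊙ (P j).map (starRingEnd 𝕜) := by
  rw [← sum_sum_hadamard_map_starRingEnd_eq_one hsum, ← Finset.sum_sub_distrib]
  exact Finset.sum_congr rfl fun i _ => (Finset.sum_erase_eq_sub (mem_univ i)).symm

end SumEqOne

variable [Fintype n]

theorem PosSemidef.of_conjTranspose_eq_of_mul_self_eq {P : Matrix n n 𝕜}
    (hself : Pᴴ = P) (hidem : P * P = P) : P.PosSemidef := by
  simpa [hself, hidem] using posSemidef_conjTranspose_mul_self P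

theorem hadamard_map_starRingEnd_mulVec_one (A : Matrix n n 𝕜) :
    (A ⊙ A.map (starRingEnd 𝕜)) *ᵥ 1 = (A * Aᴴ).diag := by
  ext i
  simp [mulVec, dotProduct, mul_apply, hadamard_apply]

end Matrix

theorem avgMix_posSemidef_general (ℓ m : ℕ)
    (F : Fin m → Matrix (Fin ℓ) (Fin ℓ) ℂ)
    (hherm : ∀ r, (F r)ᴴ = F r)
    (hidem : ∀ r, F r * F r = F r)
    (hsum : ∑ r, F r = 1)
    :
    (avgMix F).PosSemidef ∧
      (1 - avgMix F).PosSemidef ∧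
      avgMix F *ᵥ (fun _ => (1 : ℂ)) = fun _ => (1 : ℂ) := by
  have hF r : (F r).PosSemidef := .of_conjTranspose_eq_of_mul_self_eq (hherm r) (hidem r)
  have hschur r s : (F r ⊙ (F s).map (starRingEnd ℂ)).PosSemidef :=
    (hF r).hadamard (hF s).map_starRingEnd
  refine ⟨posSemidef_sum _ fun r _ => hschur r r, ?_, ?_⟩
  · rw [avgMix, one_sub_sum_hadamard_map_starRingEnd hsum]
    exact posSemidef_sum _ fun r _ => posSemidef_sum _ fun s _ => hschur r s
  · calc avgMix F *ᵥ 1 = ∑ r, (F r * (F r)ᴴ).diag := by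
          simp only [avgMix, sum_mulVec, hadamard_map_starRingEnd_mulVec_one]
      _ = 1 := by simp only [hherm, hidem, ← diag_sum, hsum, diag_one]

/-- The average mixing matrix is positive semidefinite, I − M̂ is positive semidefinite, and the all-ones vector is an eigenvector for the eigenvalue 1. -/
theorem avgMix_posSemidef (ℓ m : ℕ) (hℓ : 0 < ℓ)
    (U : Matrix (Fin ℓ) (Fin ℓ) ℂ)
    (hU : U ∈ Matrix.unitaryGroup (Fin ℓ) ℂ)
    (lam : Fin m → ℂ) (F : Fin m → Matrix (Fin ℓ) (Fin ℓ) ℂ)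
    (hdist : Function.Injective lam)
    (hmod : ∀ r, ‖lam r‖ = 1)
    (hherm : ∀ r, (F r)ᴴ = F r)
    (hidem : ∀ r, F r * F r = F r)
    (horth : ∀ r s, r ≠ s → F r * F s = 0)
    (hsum : ∑ r, F r = 1)
    (hspec : U = ∑ r, lam r • F r)
    :
    (avgMix F).PosSemidef ∧
      (1 - avgMix F).PosSemidef ∧
      avgMix F *ᵥ (fun _ => (1 : ℂ)) = fun _ => (1 : ℂ) :=
  avgMix_posSemidef_general ℓ m F hherm hidem hsum
end

section
/- Let U be an ℓ×ℓ complex unitary matrix with spectral decomposition U = Σ_{r=1}^m λ_r F_r, and let M̂ = Σ_r F_r ∘ conj(F_r) be its average mixing matrix. Then trace(M̂) = (1/ℓ) Σ_{r=1}^m (trace F_r)² holds if and only if U is walk-regular, i.e., each F_r has constant diagonal (necessarily equal to trace(F_r)/ℓ). -/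
open Matrix Finset

section Variance

variable {ι α : Type*} [Fintype ι]

theorem sum_sum_sub_sq_eq [CommRing α] (d : ι → α) :
    ∑ i, ∑ j, (d i - d j) ^ 2 = 2 * (Fintype.card ι * ∑ i, d i ^ 2 - (∑ i, d i) ^ 2) := by
  simp only [sub_sq, sum_add_distrib, sum_sub_distrib, sum_const, card_univ, nsmul_eq_mul,
    mul_assoc, ← mul_sum, ← sum_mul]
  ring

theorem card_mul_sum_sq_eq_sq_sum_iff [Field α] [LinearOrder α] [IsStrictOrderedRing α]
    (d : ι → α) :
    Fintype.card ι * ∑ i, d i ^ 2 = (∑ i, d i) ^ 2 ↔ ∀ i j, d i = d j := by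
  have hsq : ∀ i j, 0 ≤ (d i - d j) ^ 2 := fun _ _ => sq_nonneg _
  calc Fintype.card ι * ∑ i, d i ^ 2 = (∑ i, d i) ^ 2
      ↔ ∑ i, ∑ j, (d i - d j) ^ 2 = 0 := by
        rw [sum_sum_sub_sq_eq, mul_eq_zero_iff_left two_ne_zero, sub_eq_zero]
    _ ↔ ∀ i j, d i = d j := by
      simp only [Fintype.sum_eq_zero_iff_of_nonneg (fun i => sum_nonneg fun j _ => hsq i j),
        funext_iff, Pi.zero_apply, Fintype.sum_eq_zero_iff_of_nonneg (hsq _), sq_eq_zero_iff,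
        sub_eq_zero]

end Variance

namespace Matrix.IsHermitian

variable {n : Type*} {A : Matrix n n ℂ}

theorem ofReal_re_apply_self (hA : A.IsHermitian) (i : n) : ((A i i).re : ℂ) = A i i :=
  hA.coe_re_apply_self i

theorem trace_eq_ofReal_sum_re_diag [Fintype n] (hA : A.IsHermitian) :
    A.trace = ((∑ i, (A i i).re : ℝ) : ℂ) := by
  simp only [trace, diag, Complex.ofReal_sum, hA.ofReal_re_apply_self]

theorem trace_hadamard_map_conj [Fintype n] (hA : A.IsHermitian) :
    (A ⊙ A.map (starRingEnd ℂ)).trace = ((∑ i, (A i i).re ^ 2 : ℝ) : ℂ) := by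
  simp only [trace, diag, hadamard_apply, map_apply, Complex.ofReal_sum, Complex.ofReal_pow]
  refine sum_congr rfl fun i _ => ?_
  rw [← hA.ofReal_re_apply_self i, Complex.conj_ofReal, Complex.ofReal_re, sq]

end Matrix.IsHermitian

theorem trace_avgMix {ℓ m : ℕ} {F : Fin m → Matrix (Fin ℓ) (Fin ℓ) ℂ}
    (hF : ∀ r, (F r).IsHermitian) :
    (avgMix F).trace = ((∑ r, ∑ i, (F r i i).re ^ 2 : ℝ) : ℂ) := by
  simp only [avgMix, trace_sum, (hF _).trace_hadamard_map_conj, Complex.ofReal_sum]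

theorem avgMix_trace_eq_iff_walkRegular_general (ℓ m : ℕ) (hℓ : 0 < ℓ)
    (F : Fin m → Matrix (Fin ℓ) (Fin ℓ) ℂ)
    (hherm : ∀ r, (F r)ᴴ = F r)
    :
    (avgMix F).trace = ((ℓ : ℂ))⁻¹ * ∑ r, ((F r).trace) ^ 2 ↔
      ∀ r, ∀ i j : Fin ℓ, F r i i = F r j j := by
  have hF : ∀ r, (F r).IsHermitian := hherm
  set d : Fin m → Fin ℓ → ℝ := fun r i => (F r i i).re
  have hdiag : ∀ r i j, F r i i = F r j j ↔ d r i = d r j := fun r i j => by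
    rw [← (hF r).ofReal_re_apply_self i, ← (hF r).ofReal_re_apply_self j, Complex.ofReal_inj]
  have hsum_sq : ∑ r, (F r).trace ^ 2 = ((∑ r, (∑ i, d r i) ^ 2 : ℝ) : ℂ) := by
    simp only [(hF _).trace_eq_ofReal_sum_re_diag, Complex.ofReal_sum, Complex.ofReal_pow, d]
  have hℓ' : (ℓ : ℂ) ≠ 0 := Nat.cast_ne_zero.mpr hℓ.ne'
  calc (avgMix F).trace = (ℓ : ℂ)⁻¹ * ∑ r, (F r).trace ^ 2
      ↔ ∑ r, (ℓ : ℝ) * ∑ i, d r i ^ 2 = ∑ r, (∑ i, d r i) ^ 2 := by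
        rw [trace_avgMix hF, hsum_sq, eq_inv_mul_iff_mul_eq₀ hℓ', ← mul_sum]
        exact_mod_cast Iff.rfl
    _ ↔ ∀ r, (ℓ : ℝ) * ∑ i, d r i ^ 2 = (∑ i, d r i) ^ 2 := by
        rw [eq_comm, sum_eq_sum_iff_of_le fun r _ => ?_]
        · simp only [mem_univ, true_implies, eq_comm]
        · simpa using sq_sum_le_card_mul_sum_sq (s := univ) (f := d r)
    _ ↔ ∀ r, ∀ i j : Fin ℓ, F r i i = F r j j := by
        simp only [hdiag]
        exact forall_congr' fun r => by simpa using card_mul_sum_sq_eq_sq_sum_iff (d r)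

/-- trace(M̂) = (1/ℓ) ∑ r, (trace F_r)² iff U is walk-regular, i.e. each F_r has constant diagonal. -/
theorem avgMix_trace_eq_iff_walkRegular (ℓ m : ℕ) (hℓ : 0 < ℓ)
    (U : Matrix (Fin ℓ) (Fin ℓ) ℂ)
    (hU : U ∈ Matrix.unitaryGroup (Fin ℓ) ℂ)
    (lam : Fin m → ℂ) (F : Fin m → Matrix (Fin ℓ) (Fin ℓ) ℂ)
    (hdist : Function.Injective lam)
    (hmod : ∀ r, ‖lam r‖ = 1)
    (hherm : ∀ r, (F r)ᴴ = F r)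
    (hidem : ∀ r, F r * F r = F r)
    (horth : ∀ r s, r ≠ s → F r * F s = 0)
    (hsum : ∑ r, F r = 1)
    (hspec : U = ∑ r, lam r • F r)
    :
    (avgMix F).trace = ((ℓ : ℂ))⁻¹ * ∑ r, ((F r).trace) ^ 2 ↔
      ∀ r, ∀ i j : Fin ℓ, F r i i = F r j j :=
  avgMix_trace_eq_iff_walkRegular_general ℓ m hℓ F hherm
end

section
/- Let U be an ℓ×ℓ complex unitary matrix with spectral decomposition U = Σ_{r=1}^m λ_r F_r, and let M̂ = Σ_r F_r ∘ conj(F_r) be its average mixing matrix. Then trace(M̂) ≥ 1. -/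
open Matrix Finset

/-! The trace of an idempotent `F_r` is its rank, a natural number, and these ranks add up to `ℓ`.
The trace of `F_r ∘ conj F_r` is `∑ i, |(F_r)ᵢᵢ|²`, which by Cauchy–Schwarz is at least
`rank(F_r)² / ℓ ≥ rank(F_r) / ℓ`; summing over `r` gives at least `1`. -/

namespace Matrix

variable {n : Type*} [Fintype n]

theorem IsIdempotentElem.trace_eq_rank {K : Type*} [DecidableEq n] [Field K]
    {A : Matrix n n K} (hA : IsIdempotentElem A) : A.trace = A.rank := by
  have hLin : IsIdempotentElem A.toLin' := hA.map toLinAlgEquiv'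
  rw [← trace_toLin'_eq, (LinearMap.IsIdempotentElem.isProj_range _ hLin).trace]
  rfl

theorem sum_rank_eq_card_of_sum_eq_one {ι K : Type*} [Fintype ι] [DecidableEq n] [Field K]
    [CharZero K] {F : ι → Matrix n n K} (hidem : ∀ r, IsIdempotentElem (F r))
    (hsum : ∑ r, F r = 1) : ∑ r, (F r).rank = Fintype.card n := by
  have h : ((∑ r, (F r).rank : ℕ) : K) = Fintype.card n := by
    rw [Nat.cast_sum, ← trace_one, ← hsum, trace_sum]
    exact Finset.sum_congr rfl fun r _ => (hidem r).trace_eq_rank.symm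
  exact_mod_cast h

theorem trace_hadamard_map_conj (A : Matrix n n ℂ) :
    (A ⊙ A.map (starRingEnd ℂ)).trace = ∑ i, (Complex.normSq (A i i) : ℂ) := by
  simp [trace, Complex.mul_conj]

theorem normSq_trace_le_card_mul (A : Matrix n n ℂ) :
    Complex.normSq A.trace ≤ Fintype.card n * ∑ i, Complex.normSq (A i i) := by
  have hCS := sq_sum_le_card_mul_sum_sq (s := Finset.univ) (f := fun i => ‖A i i‖)
  simp only [Complex.normSq_eq_norm_sq, card_univ] at hCS ⊢
  calc ‖A.trace‖ ^ 2 ≤ (∑ i, ‖A i i‖) ^ 2 := by gcongr; exact norm_sum_le _ _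
    _ ≤ _ := hCS

theorem IsIdempotentElem.rank_sq_le_card_mul_trace_hadamard_map_conj [DecidableEq n]
    {A : Matrix n n ℂ} (hA : IsIdempotentElem A) :
    (A.rank : ℝ) ^ 2 ≤ Fintype.card n * (A ⊙ A.map (starRingEnd ℂ)).trace.re := by
  have h := normSq_trace_le_card_mul A
  rw [hA.trace_eq_rank, Complex.normSq_natCast] at h
  simpa [trace_hadamard_map_conj, sq] using h

end Matrix

theorem avgMix_trace_ge_one_general (ℓ m : ℕ) (hℓ : 0 < ℓ)
    (F : Fin m → Matrix (Fin ℓ) (Fin ℓ) ℂ)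
    (hidem : ∀ r, F r * F r = F r)
    (hsum : ∑ r, F r = 1)
    :
    1 ≤ (avgMix F).trace.re := by
  have hrank : ∑ r, ((F r).rank : ℝ) = ℓ := by
    exact_mod_cast (sum_rank_eq_card_of_sum_eq_one hidem hsum).trans (Fintype.card_fin ℓ)
  have hℓ_le : (ℓ : ℝ) ≤ ℓ * (avgMix F).trace.re := by
    rw [avgMix, trace_sum, Complex.re_sum, mul_sum]
    calc (ℓ : ℝ) = ∑ r, ((F r).rank : ℝ) := hrank.symm
      _ ≤ ∑ r, ((F r).rank : ℝ) ^ 2 := by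
        gcongr with r
        exact_mod_cast Nat.le_self_pow two_ne_zero _
      _ ≤ _ := by
        gcongr with r
        simpa using IsIdempotentElem.rank_sq_le_card_mul_trace_hadamard_map_conj (hidem r)
  exact (le_mul_iff_one_le_right (by exact_mod_cast hℓ)).mp hℓ_le

/-- trace(M̂) ≥ 1. -/
theorem avgMix_trace_ge_one (ℓ m : ℕ) (hℓ : 0 < ℓ)
    (U : Matrix (Fin ℓ) (Fin ℓ) ℂ)
    (hU : U ∈ Matrix.unitaryGroup (Fin ℓ) ℂ)
    (lam : Fin m → ℂ) (F : Fin m → Matrix (Fin ℓ) (Fin ℓ) ℂ)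
    (hdist : Function.Injective lam)
    (hmod : ∀ r, ‖lam r‖ = 1)
    (hherm : ∀ r, (F r)ᴴ = F r)
    (hidem : ∀ r, F r * F r = F r)
    (horth : ∀ r s, r ≠ s → F r * F s = 0)
    (hsum : ∑ r, F r = 1)
    (hspec : U = ∑ r, lam r • F r)
    :
    1 ≤ (avgMix F).trace.re :=
  avgMix_trace_ge_one_general ℓ m hℓ F hidem hsum
end

section
/- Let U be an ℓ×ℓ complex unitary matrix with ℓ distinct eigenvalues λ_1, …, λ_ℓ and a corresponding orthonormal basis of eigenvectors z_1, …, z_ℓ (so U z_r = λ_r z_r), and suppose each eigenvector z_r is flat, i.e., all entries of z_r have the same absolute value 1/√ℓ. Then for every unit vector x ∈ ℂ^ℓ and every subset S of coordinates with characteristic matrix D_S, the time averages (1/K) Σ_{k=0}^{K-1} x* (U^k)* D_S U^k x converge, as K → ∞, to |S|/ℓ, independently of the initial state x. -/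
/-!
Expanding `x = ∑ c_r z_r` in the eigenbasis gives
`x* (U^k)* D_S U^k x = ∑_{r,s} c̄_r c_s ⟨z_r, D_S z_s⟩ (λ̄_r λ_s)^k`.
Unitarity puts the eigenvalues on the unit circle, so the Cesàro mean of `(λ̄_r λ_s)^k` tends to
`1` when `λ_r = λ_s` and to `0` otherwise; by distinctness only the diagonal `r = s` survives.
Flatness gives `⟨z_r, D_S z_r⟩ = |S|/ℓ` for every `r`, and Parseval `∑ |c_r|^2 = 1` then
yields the limit `|S|/ℓ`.
-/

open Matrix Filter Finset

/-- The diagonal 0–1 characteristic matrix of a subset `S` of coordinates. -/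
noncomputable def charMatrix {ℓ : ℕ} (S : Finset (Fin ℓ)) : Matrix (Fin ℓ) (Fin ℓ) ℂ :=
  Matrix.diagonal fun i => if i ∈ S then 1 else 0

section RCLike

variable {𝕜 : Type*} [RCLike 𝕜]

theorem star_mul_eq_one_iff_of_norm_eq_one_s15 {a : 𝕜} (b : 𝕜) (ha : ‖a‖ = 1) :
    star a * b = 1 ↔ b = a := by
  have haa : star a * a = 1 := by
    rw [RCLike.star_def, RCLike.conj_mul, ha]; norm_num
  constructor
  · intro h
    exact mul_left_cancel₀ (left_ne_zero_of_mul_eq_one haa) (h.trans haa.symm)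
  · rintro rfl; exact haa

theorem tendsto_cesaro_pow_of_norm_eq_one {μ : 𝕜} (hμ : ‖μ‖ = 1) :
    Tendsto (fun K : ℕ => (K : 𝕜)⁻¹ * ∑ k ∈ range K, μ ^ k) atTop
      (nhds (if μ = 1 then 1 else 0)) := by
  split_ifs with h1
  · subst h1
    refine tendsto_const_nhds.congr' ?_
    filter_upwards [eventually_ne_atTop 0] with K hK
    simp [hK]
  · rw [tendsto_zero_iff_norm_tendsto_zero]
    refine squeeze_zero (fun _ => norm_nonneg _) (fun K => ?_)
      (by simpa using tendsto_inv_atTop_nhds_zero_nat.mul_const (2 / ‖μ - 1‖))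
    have hpow : ‖μ ^ K - 1‖ ≤ 2 := by
      calc ‖μ ^ K - 1‖ ≤ ‖μ ^ K‖ + ‖(1 : 𝕜)‖ := norm_sub_le _ _
        _ = 2 := by rw [norm_pow, hμ, one_pow, norm_one]; norm_num
    rw [geom_sum_eq h1, norm_mul, norm_inv, RCLike.norm_natCast, norm_div]
    gcongr

theorem tendsto_cesaro_sum_mul_pow {α : Type*} (s : Finset α) (a μ : α → 𝕜)
    (hμ : ∀ j ∈ s, ‖μ j‖ = 1) :
    Tendsto (fun K : ℕ => (K : 𝕜)⁻¹ * ∑ k ∈ range K, ∑ j ∈ s, a j * μ j ^ k) atTop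
      (nhds (∑ j ∈ s, if μ j = 1 then a j else 0)) := by
  have hsplit : ∀ K : ℕ, (K : 𝕜)⁻¹ * ∑ k ∈ range K, ∑ j ∈ s, a j * μ j ^ k
      = ∑ j ∈ s, a j * ((K : 𝕜)⁻¹ * ∑ k ∈ range K, μ j ^ k) := fun K => by
    rw [Finset.sum_comm, Finset.mul_sum]
    refine Finset.sum_congr rfl fun j _ => ?_
    rw [← Finset.mul_sum]
    ring
  simp only [hsplit]
  refine tendsto_finsetSum _ fun j hj => ?_
  simpa using (tendsto_cesaro_pow_of_norm_eq_one (hμ j hj)).const_mul (a j)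

end RCLike

namespace Matrix

variable {n : Type*} [Fintype n]

theorem pow_mulVec_of_mulVec_eq_smul [DecidableEq n] {R : Type*} [CommSemiring R]
    {U : Matrix n n R} {μ : R} {v : n → R} (h : U *ᵥ v = μ • v) (k : ℕ) :
    (U ^ k) *ᵥ v = μ ^ k • v := by
  induction k with
  | zero => simp
  | succ k ih => rw [pow_succ', ← mulVec_mulVec, ih, mulVec_smul, h, smul_smul, pow_succ]

theorem star_dotProduct_conjTranspose_mul_mul_mulVec {R : Type*} [CommSemiring R] [StarRing R]
    (A M : Matrix n n R) (x : n → R) :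
    star x ⬝ᵥ ((Aᴴ * M * A) *ᵥ x) = star (A *ᵥ x) ⬝ᵥ (M *ᵥ (A *ᵥ x)) := by
  rw [← mulVec_mulVec, ← mulVec_mulVec, dotProduct_mulVec, ← star_mulVec]

theorem star_sum_smul_dotProduct_mulVec_sum_smul {ι R : Type*} [Fintype ι] [CommSemiring R]
    [StarRing R] (M : Matrix n n R) (a : ι → R) (z : ι → n → R) :
    star (∑ r, a r • z r) ⬝ᵥ (M *ᵥ ∑ s, a s • z s)
      = ∑ r, ∑ s, star (a r) * a s * (star (z r) ⬝ᵥ (M *ᵥ z s)) := by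
  simp only [star_sum, star_smul, mulVec_sum, mulVec_smul, sum_dotProduct, dotProduct_sum,
    smul_dotProduct, dotProduct_smul, smul_eq_mul, Finset.mul_sum]
  rw [Finset.sum_comm]
  exact Finset.sum_congr rfl fun r _ => Finset.sum_congr rfl fun s _ => by ring

section Orthonormal

variable [DecidableEq n] {R : Type*} [CommRing R] [StarRing R] {z : n → n → R}

theorem sum_dotProduct_smul_of_orthonormal
    (hz : ∀ r s, star (z r) ⬝ᵥ z s = if r = s then 1 else 0) (x : n → R) :
    ∑ r, (star (z r) ⬝ᵥ x) • z r = x := by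
  -- The `z r` are the columns of a square matrix `Z` with `Zᴴ Z = 1`, so also `Z Zᴴ = 1`.
  let Z : Matrix n n R := (of z)ᵀ
  have hZ : star Z * Z = 1 := by
    ext r s
    simpa [Z, mul_apply, one_apply, dotProduct] using hz r s
  have hZ' : Z * star Z = 1 := mul_eq_one_comm.mp hZ
  calc ∑ r, (star (z r) ⬝ᵥ x) • z r = Z *ᵥ (star Z *ᵥ x) := by
        ext i
        simp [Z, mulVec, dotProduct, Finset.sum_apply, mul_comm]
    _ = x := by rw [mulVec_mulVec, hZ', one_mulVec]

theorem sum_star_mul_dotProduct_of_orthonormal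
    (hz : ∀ r s, star (z r) ⬝ᵥ z s = if r = s then 1 else 0) (x : n → R) :
    ∑ r, star (star (z r) ⬝ᵥ x) * (star (z r) ⬝ᵥ x) = star x ⬝ᵥ x := by
  have h := star_sum_smul_dotProduct_mulVec_sum_smul 1 (fun r => star (z r) ⬝ᵥ x) z
  simpa [sum_dotProduct_smul_of_orthonormal hz, hz] using h.symm

end Orthonormal

open scoped ComplexOrder in
theorem norm_eq_one_of_mem_unitaryGroup_of_mulVec_eq_smul [DecidableEq n] {𝕜 : Type*} [RCLike 𝕜]
    {U : Matrix n n 𝕜} (hU : U ∈ unitaryGroup n 𝕜) {μ : 𝕜} {v : n → 𝕜} (hv : v ≠ 0)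
    (h : U *ᵥ v = μ • v) : ‖μ‖ = 1 := by
  have hvv : star v ⬝ᵥ v ≠ 0 := dotProduct_star_self_eq_zero.not.mpr hv
  have hisom : star (U *ᵥ v) ⬝ᵥ (U *ᵥ v) = star v ⬝ᵥ v := by
    rw [star_mulVec, dotProduct_mulVec, vecMul_vecMul, ← star_eq_conjTranspose,
      mem_unitaryGroup_iff'.mp hU, vecMul_one]
  rw [h, star_smul, smul_dotProduct, dotProduct_smul, smul_smul, smul_eq_mul] at hisom
  have hμμ : ((‖μ‖ ^ 2 : ℝ) : 𝕜) = 1 := by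
    rw [RCLike.ofReal_pow, ← RCLike.conj_mul, ← RCLike.star_def]
    exact (mul_eq_right₀ hvv).mp hisom
  exact (pow_eq_one_iff_of_nonneg (norm_nonneg μ) two_ne_zero).mp (by exact_mod_cast hμμ)

end Matrix

theorem star_dotProduct_charMatrix_mulVec {ℓ : ℕ} (S : Finset (Fin ℓ)) (v : Fin ℓ → ℂ) :
    star v ⬝ᵥ (charMatrix S *ᵥ v) = ∑ i ∈ S, star (v i) * v i := by
  simp [charMatrix, dotProduct, mulVec_diagonal, Finset.sum_ite_mem]

theorem star_dotProduct_charMatrix_mulVec_of_flat {ℓ : ℕ} (S : Finset (Fin ℓ)) {v : Fin ℓ → ℂ}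
    (hv : ∀ i, ‖v i‖ = 1 / Real.sqrt ℓ) :
    star v ⬝ᵥ (charMatrix S *ᵥ v) = S.card / ℓ := by
  have hentry : ∀ i, star (v i) * v i = (ℓ : ℂ)⁻¹ := fun i => by
    rw [RCLike.star_def, RCLike.conj_mul, hv i, ← RCLike.ofReal_pow, div_pow,
      Real.sq_sqrt (Nat.cast_nonneg ℓ)]
    push_cast
    ring
  rw [star_dotProduct_charMatrix_mulVec, Finset.sum_congr rfl fun i _ => hentry i,
    Finset.sum_const, nsmul_eq_mul, div_eq_mul_inv]

theorem avg_prob_walk_regular_uniform_general (ℓ : ℕ)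
    (U : Matrix (Fin ℓ) (Fin ℓ) ℂ)
    (hU : U ∈ Matrix.unitaryGroup (Fin ℓ) ℂ)
    (lam : Fin ℓ → ℂ) (hdist : Function.Injective lam)
    (z : Fin ℓ → Fin ℓ → ℂ)
    (hortho : ∀ r s, star (z r) ⬝ᵥ z s = if r = s then 1 else 0)
    (heig : ∀ r, U *ᵥ z r = lam r • z r)
    (hflat : ∀ r i, ‖z r i‖ = 1 / Real.sqrt ℓ)
    (x : Fin ℓ → ℂ) (hx : star x ⬝ᵥ x = 1)
    (S : Finset (Fin ℓ)) :
    Filter.Tendsto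
      (fun K : ℕ => (K : ℂ)⁻¹ *
        ∑ k ∈ Finset.range K,
          star x ⬝ᵥ (((U ^ k)ᴴ * charMatrix S * U ^ k) *ᵥ x))
      Filter.atTop
      (nhds ((S.card : ℂ) / (ℓ : ℂ))) := by
  set c : Fin ℓ → ℂ := fun r => star (z r) ⬝ᵥ x
  have hxc : ∑ r, c r • z r = x := sum_dotProduct_smul_of_orthonormal hortho x
  have hparseval : ∑ r, star (c r) * c r = 1 :=
    (sum_star_mul_dotProduct_of_orthonormal hortho x).trans hx
  have hlam : ∀ r, ‖lam r‖ = 1 := fun r =>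
    norm_eq_one_of_mem_unitaryGroup_of_mulVec_eq_smul hU
      (fun h0 => by simpa [h0] using hortho r r) (heig r)
  set A : Fin ℓ × Fin ℓ → ℂ := fun p =>
    star (c p.1) * c p.2 * (star (z p.1) ⬝ᵥ (charMatrix S *ᵥ z p.2))
  have hterm : ∀ k : ℕ, star x ⬝ᵥ (((U ^ k)ᴴ * charMatrix S * U ^ k) *ᵥ x)
      = ∑ p, A p * (star (lam p.1) * lam p.2) ^ k := fun k => by
    have hUx : U ^ k *ᵥ x = ∑ r, (c r * lam r ^ k) • z r := by
      simp only [← hxc, mulVec_sum, mulVec_smul, pow_mulVec_of_mulVec_eq_smul (heig _),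
        smul_smul, mul_comm]
    rw [star_dotProduct_conjTranspose_mul_mul_mulVec, hUx,
      star_sum_smul_dotProduct_mulVec_sum_smul, ← Fintype.sum_prod_type']
    refine Finset.sum_congr rfl fun p _ => ?_
    simp only [A, star_mul, star_pow]
    ring
  have hlim : (∑ p, if star (lam p.1) * lam p.2 = 1 then A p else 0) = S.card / ℓ := by
    simp only [Fintype.sum_prod_type, star_mul_eq_one_iff_of_norm_eq_one_s15 _ (hlam _),
      hdist.eq_iff, Finset.sum_ite_eq', Finset.mem_univ, if_true, A,
      star_dotProduct_charMatrix_mulVec_of_flat S (hflat _), ← Finset.sum_mul, hparseval,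
      one_mul]
  simp only [hterm]
  exact hlim ▸ tendsto_cesaro_sum_mul_pow Finset.univ A _ fun p _ => by
    rw [norm_mul, norm_star, hlam, hlam, one_mul]

/-- If `U` is unitary with ℓ distinct eigenvalues and an orthonormal
eigenbasis of flat eigenvectors (all entries of each `z_r` have absolute value
`1/√ℓ`), then for every unit vector `x` and every subset `S` of coordinates, the
time averages `(1/K) ∑_{k<K} x* (U^k)* D_S U^k x` converge to `|S|/ℓ`,
independently of the initial state `x`. -/
theorem avg_prob_walk_regular_uniform (ℓ : ℕ) (hℓ : 0 < ℓ)
    (U : Matrix (Fin ℓ) (Fin ℓ) ℂ)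
    (hU : U ∈ Matrix.unitaryGroup (Fin ℓ) ℂ)
    (lam : Fin ℓ → ℂ) (hdist : Function.Injective lam)
    (z : Fin ℓ → Fin ℓ → ℂ)
    (hortho : ∀ r s, star (z r) ⬝ᵥ z s = if r = s then 1 else 0)
    (heig : ∀ r, U *ᵥ z r = lam r • z r)
    (hflat : ∀ r i, ‖z r i‖ = 1 / Real.sqrt ℓ)
    (x : Fin ℓ → ℂ) (hx : star x ⬝ᵥ x = 1)
    (S : Finset (Fin ℓ)) :
    Filter.Tendsto
      (fun K : ℕ => (K : ℂ)⁻¹ *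
        ∑ k ∈ Finset.range K,
          star x ⬝ᵥ (((U ^ k)ᴴ * charMatrix S * U ^ k) *ᵥ x))
      Filter.atTop
      (nhds ((S.card : ℂ) / (ℓ : ℂ))) :=
  avg_prob_walk_regular_uniform_general ℓ U hU lam hdist z hortho heig hflat x hx S
end

section
/- Let U be an ℓ×ℓ complex unitary matrix with spectral decomposition U = Σ_{r=1}^m λ_r F_r, and suppose every entry of U is algebraic over ℚ. Then every entry of the average mixing matrix M̂ = Σ_r F_r ∘ conj(F_r) is algebraic over ℚ. -/
open Matrix Finset

/-!
Each eigenvalue `λ_r` with `F_r ≠ 0` is a root of the characteristic polynomial of `U`, whose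
coefficients are algebraic, so `λ_r` is algebraic. By Lagrange interpolation over these nodes
(the `λ_r` with `F_r = 0` are unconstrained), each nonzero `F_r` is a polynomial in `U` with
algebraic coefficients, so the entries of every `F_r` lie in the field of algebraic numbers.
This field is stable under complex conjugation, hence contains the entries of
`M̂ = ∑ F_r ∘ conj(F_r)`.
-/

open Polynomial

theorem sum_smul_mul_of_orthogonal {ι R A : Type*} [Fintype ι] [CommSemiring R] [Semiring A]
    [Module R A] [IsScalarTower R A A] {lam : ι → R} {F : ι → A}
    (hidem : ∀ r, F r * F r = F r) (horth : ∀ r s, r ≠ s → F r * F s = 0) (t : ι) :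
    (∑ r, lam r • F r) * F t = lam t • F t := by
  rw [sum_mul, sum_eq_single t]
  · rw [smul_mul_assoc, hidem]
  · intro r _ hrt
    rw [smul_mul_assoc, horth r t hrt, smul_zero]
  · simp

theorem mem_spectrum_of_mul_eq_smul {R A : Type*} [CommSemiring R] [Ring A] [Algebra R A]
    {a b : A} {r : R} (hab : a * b = r • b) (hb : b ≠ 0) : r ∈ spectrum R a := by
  refine spectrum.mem_iff.2 fun hu => hb ?_
  rw [← hu.mul_right_eq_zero, sub_mul, ← Algebra.smul_def, hab, sub_self]

theorem aeval_mul_of_mul_eq_smul {R A : Type*} [CommSemiring R] [Semiring A] [Algebra R A]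
    {u e : A} {μ : R} (h : u * e = μ • e) (p : R[X]) : aeval u p * e = p.eval μ • e := by
  induction p using Polynomial.induction_on' with
  | add p q hp hq => rw [map_add, add_mul, hp, hq, eval_add, add_smul]
  | monomial k a =>
    have hpow : u ^ k * e = μ ^ k • e := by
      induction k with
      | zero => simp
      | succ k ih => rw [pow_succ', mul_assoc, ih, mul_smul_comm, h, smul_smul, pow_succ]
    rw [aeval_monomial, mul_assoc, hpow, eval_monomial, ← Algebra.smul_def, smul_smul]

theorem eq_aeval_lagrangeBasis {k A ι : Type*} [Field k] [Ring A] [Algebra k A] [DecidableEq ι]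
    {u : A} {e : ι → A} {μ : ι → k} {T : Finset ι} (hsum : ∑ t ∈ T, e t = 1)
    (heig : ∀ t ∈ T, u * e t = μ t • e t) (hinj : Set.InjOn μ T) {r : ι} (hr : r ∈ T) :
    e r = aeval u (Lagrange.basis T μ r) :=
  calc e r = ∑ t ∈ T, (Lagrange.basis T μ r).eval (μ t) • e t := by
        rw [sum_eq_single_of_mem r hr, Lagrange.eval_basis_self hinj hr, one_smul]
        intro t ht htr
        rw [Lagrange.eval_basis_of_ne htr.symm ht, zero_smul]
    _ = ∑ t ∈ T, aeval u (Lagrange.basis T μ r) * e t :=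
        sum_congr rfl fun t ht => (aeval_mul_of_mul_eq_smul (heig t ht) _).symm
    _ = aeval u (Lagrange.basis T μ r) := by rw [← mul_sum, hsum, mul_one]

theorem Lagrange.basis_mem_lifts {F ι : Type*} [Field F] [DecidableEq ι] (S : Subfield F)
    {s : Finset ι} {v : ι → F} (hv : ∀ j ∈ s, v j ∈ S) {i : ι} (hi : i ∈ s) :
    Lagrange.basis s v i ∈ lifts S.subtype := by
  rw [lifts_iff_liftsRing]
  refine Subring.prod_mem _ fun j hj => ?_
  have hvj := hv j (mem_of_mem_erase hj)
  exact Subring.mul_mem _ (C'_mem_lifts ⟨⟨_, S.inv_mem (S.sub_mem (hv i hi) hvj)⟩, rfl⟩)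
    (Subring.sub_mem _ (X_mem_lifts _) (C'_mem_lifts ⟨⟨_, hvj⟩, rfl⟩))

theorem Subring.aeval_mem_matrix {R n : Type*} [CommRing R] [Fintype n] [DecidableEq n]
    (S : Subring R) {M : Matrix n n R} (hM : M ∈ S.matrix) {p : R[X]}
    (hp : p ∈ lifts S.subtype) : aeval M p ∈ S.matrix := by
  rw [aeval_eq_sum_range]
  refine sum_mem fun k _ => ?_
  obtain ⟨c, hc⟩ := (lifts_iff_coeff_lifts p).1 hp k
  intro i j
  rw [← hc, Matrix.smul_apply, smul_eq_mul]
  exact S.mul_mem c.2 (pow_mem hM k i j)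

theorem Matrix.isIntegral_of_isRoot_charpoly {R A n : Type*} [CommRing R] [CommRing A]
    [Algebra R A] [Fintype n] [DecidableEq n] {M : Matrix n n A}
    (hM : ∀ i j, IsIntegral R (M i j)) {μ : A} (hμ : M.charpoly.IsRoot μ) :
    IsIntegral R μ := by
  let N : Matrix n n (integralClosure R A) := fun i j => ⟨M i j, hM i j⟩
  have hN : N.map (algebraMap _ A) = M := rfl
  refine isIntegral_trans (A := integralClosure R A) μ ⟨N.charpoly, N.charpoly_monic, ?_⟩
  rwa [← eval_map, ← charpoly_map, hN]

theorem conj_mem_algebraicClosure {z : ℂ} (hz : z ∈ algebraicClosure ℚ ℂ) :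
    starRingEnd ℂ z ∈ algebraicClosure ℚ ℂ :=
  (map_mem_algebraicClosure_iff (Complex.conjAe.toAlgHom.restrictScalars ℚ)).2 hz

theorem avgMix_algebraic_general (ℓ m : ℕ)
    (U : Matrix (Fin ℓ) (Fin ℓ) ℂ)
    (lam : Fin m → ℂ) (F : Fin m → Matrix (Fin ℓ) (Fin ℓ) ℂ)
    (hdist : Function.Injective lam)
    (hidem : ∀ r, F r * F r = F r)
    (horth : ∀ r s, r ≠ s → F r * F s = 0)
    (hsum : ∑ r, F r = 1)
    (hspec : U = ∑ r, lam r • F r)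
    (halg : ∀ i j, IsAlgebraic ℚ (U i j)) :
    ∀ i j, IsAlgebraic ℚ (avgMix F i j) := by
  classical
  set K := (algebraicClosure ℚ ℂ).toSubfield
  have hUK : U ∈ K.toSubring.matrix := fun i j => mem_algebraicClosure_iff.2 (halg i j)
  have heig : ∀ t, U * F t = lam t • F t := fun t =>
    hspec ▸ sum_smul_mul_of_orthogonal hidem horth t
  have hlam : ∀ t, F t ≠ 0 → lam t ∈ K := fun t ht =>
    U.isIntegral_of_isRoot_charpoly (fun i j => (halg i j).isIntegral)
      (mem_spectrum_iff_isRoot_charpoly.1 (mem_spectrum_of_mul_eq_smul (heig t) ht))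
  have hF : ∀ r, F r ∈ K.toSubring.matrix := by
    intro r
    by_cases hr : F r = 0
    · rw [hr]; exact zero_mem _
    let T := univ.filter (F · ≠ 0)
    have hrT : r ∈ T := mem_filter.2 ⟨mem_univ r, hr⟩
    rw [eq_aeval_lagrangeBasis (T := T) (by rw [sum_filter_ne_zero, hsum]) (fun t _ => heig t)
      hdist.injOn hrT]
    exact K.toSubring.aeval_mem_matrix hUK
      (Lagrange.basis_mem_lifts K (fun t ht => hlam t (mem_filter.1 ht).2) hrT)
  intro i j
  rw [← mem_algebraicClosure_iff]
  simp only [avgMix, Matrix.sum_apply, hadamard_apply, map_apply]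
  exact sum_mem fun r _ => mul_mem (hF r i j) (conj_mem_algebraicClosure (hF r i j))

/-- If every entry of U is algebraic over ℚ, then every entry of M̂ is algebraic over ℚ. -/
theorem avgMix_algebraic (ℓ m : ℕ) (hℓ : 0 < ℓ)
    (U : Matrix (Fin ℓ) (Fin ℓ) ℂ)
    (hU : U ∈ Matrix.unitaryGroup (Fin ℓ) ℂ)
    (lam : Fin m → ℂ) (F : Fin m → Matrix (Fin ℓ) (Fin ℓ) ℂ)
    (hdist : Function.Injective lam)
    (hmod : ∀ r, ‖lam r‖ = 1)
    (hherm : ∀ r, (F r)ᴴ = F r)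
    (hidem : ∀ r, F r * F r = F r)
    (horth : ∀ r s, r ≠ s → F r * F s = 0)
    (hsum : ∑ r, F r = 1)
    (hspec : U = ∑ r, lam r • F r)
    (halg : ∀ i j, IsAlgebraic ℚ (U i j)) :
    ∀ i j, IsAlgebraic ℚ (avgMix F i j) :=
  avgMix_algebraic_general ℓ m U lam F hdist hidem horth hsum hspec halg
end

section
/- Let U be an ℓ×ℓ complex unitary matrix with spectral decomposition U = Σ_{r=1}^m λ_r F_r, and suppose every entry of U is a rational number. Then every entry of the average mixing matrix M̂ = Σ_r F_r ∘ conj(F_r) is a rational number. -/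
open Matrix Finset

/-!
Since `U * F r = F r * U = λ_r • F r` with the `λ_r` distinct, the pinching
`X ↦ ∑ r, F r * X * F r` fixes every matrix commuting with `U` and kills every commutator
`⁅U, Y⁆`. Hence the kernel and the range of `X ↦ ⁅U, X⁆` meet trivially, and this descends
to the rational matrix `U` since `ℚ`-matrices embed in `ℂ`-matrices. By rank–nullity every
rational matrix is `C + ⁅U, Y⁆` with `C`, `Y` rational and `C` commuting with `U`; its
pinching is the rational matrix `C`. Finally `F r j i = conj (F r i j)` makes `M̂ i j` the
`(i, i)` entry of the pinching of the matrix unit `E j j`.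
-/

lemma LinearMap.isCompl_ker_range_of_disjoint {K V : Type*} [DivisionRing K] [AddCommGroup V]
    [Module K V] [FiniteDimensional K V] {f : V →ₗ[K] V}
    (hf : Disjoint (LinearMap.ker f) (LinearMap.range f)) :
    IsCompl (LinearMap.ker f) (LinearMap.range f) :=
  (Submodule.isCompl_iff_disjoint _ _ (by rw [add_comm, f.finrank_range_add_finrank_ker])).mpr hf

namespace Matrix

variable {ι n R : Type*} [Fintype ι] [Fintype n]

def pinching [Semiring R] (F : ι → Matrix n n R) (X : Matrix n n R) : Matrix n n R :=
  ∑ r, F r * X * F r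

lemma pinching_add [Semiring R] (F : ι → Matrix n n R) (X Y : Matrix n n R) :
    pinching F (X + Y) = pinching F X + pinching F Y := by
  simp only [pinching, mul_add, add_mul, sum_add_distrib]

lemma mul_single_one_mul_apply_same [DecidableEq n] [Semiring R] (A B : Matrix n n R)
    (i j : n) : (A * single j j (1 : R) * B) i i = A i j * B j i := by
  simp [mul_apply, single, ite_and]

structure IsSpectralDecomposition [DecidableEq n] [Semiring R] (U : Matrix n n R) (lam : ι → R)
    (F : ι → Matrix n n R) : Prop where
  injective : Function.Injective lam
  mul_self : ∀ r, F r * F r = F r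
  mul_eq_zero : ∀ r s, r ≠ s → F r * F s = 0
  sum_eq_one : ∑ r, F r = 1
  eq_sum_smul : U = ∑ r, lam r • F r

namespace IsSpectralDecomposition

variable [DecidableEq n] {U : Matrix n n R} {lam : ι → R} {F : ι → Matrix n n R}

lemma mul_idempotent_eq_smul [CommSemiring R] (h : IsSpectralDecomposition U lam F) (r : ι) :
    U * F r = lam r • F r := by
  rw [h.eq_sum_smul, sum_mul, sum_eq_single r (fun s _ hs ↦ by
    rw [smul_mul_assoc, h.mul_eq_zero s r hs, smul_zero]) (by simp), smul_mul_assoc, h.mul_self]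

lemma idempotent_mul_eq_smul [CommSemiring R] (h : IsSpectralDecomposition U lam F) (r : ι) :
    F r * U = lam r • F r := by
  rw [h.eq_sum_smul, mul_sum, sum_eq_single r (fun s _ hs ↦ by
    rw [mul_smul_comm, h.mul_eq_zero r s hs.symm, smul_zero]) (by simp), mul_smul_comm, h.mul_self]

lemma idempotent_mul_mul_idempotent_eq_zero [CommRing R] [IsDomain R] (h : IsSpectralDecomposition U lam F)
    {X : Matrix n n R} (hX : Commute U X) {r s : ι} (hrs : r ≠ s) :
    F r * X * F s = 0 := by
  have heig : lam r • (F r * X * F s) = lam s • (F r * X * F s) := by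
    calc lam r • (F r * X * F s) = F r * U * X * F s := by
          rw [h.idempotent_mul_eq_smul, smul_mul_assoc, smul_mul_assoc]
      _ = F r * X * (U * F s) := by rw [mul_assoc (F r), hX.eq, mul_assoc, mul_assoc, mul_assoc]
      _ = lam s • (F r * X * F s) := by rw [h.mul_idempotent_eq_smul, mul_smul_comm]
  have : (lam r - lam s) • (F r * X * F s) = 0 := by rw [sub_smul, heig, sub_self]
  exact (smul_eq_zero.mp this).resolve_left (sub_ne_zero.mpr (h.injective.ne hrs))

lemma pinching_eq_self [CommRing R] [IsDomain R] (h : IsSpectralDecomposition U lam F) {X : Matrix n n R}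
    (hX : Commute U X) : pinching F X = X := by
  calc pinching F X = ∑ s, ∑ r, F r * X * F s := by
        refine sum_congr rfl fun s _ ↦ (sum_eq_single s (fun r _ hr ↦
          h.idempotent_mul_mul_idempotent_eq_zero hX hr) (by simp)).symm
    _ = (∑ r, F r) * X * ∑ s, F s := by simp only [sum_mul, mul_sum]
    _ = X := by rw [h.sum_eq_one, one_mul, mul_one]

lemma pinching_lie [CommRing R] (h : IsSpectralDecomposition U lam F) (Y : Matrix n n R) :
    pinching F ⁅U, Y⁆ = 0 := by
  refine sum_eq_zero fun r _ ↦ ?_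
  calc F r * ⁅U, Y⁆ * F r = F r * U * Y * F r - F r * Y * (U * F r) := by
        rw [Ring.lie_def]; noncomm_ring
    _ = 0 := by
        rw [h.idempotent_mul_eq_smul, h.mul_idempotent_eq_smul, smul_mul_assoc, smul_mul_assoc, mul_smul_comm,
          sub_self]

theorem exists_pinching_map_eq_map [CommRing R] [IsDomain R] {K : Type*} [Field K] [Algebra K R] {U₀ : Matrix n n K}
    (h : IsSpectralDecomposition (U₀.map (algebraMap K R)) lam F) (X₀ : Matrix n n K) :
    ∃ Y₀ : Matrix n n K, pinching F (X₀.map (algebraMap K R)) = Y₀.map (algebraMap K R) := by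
  set φ : Matrix n n K →+* Matrix n n R := (algebraMap K R).mapMatrix
  have hφ_lie (A B : Matrix n n K) : φ ⁅A, B⁆ = ⁅φ A, φ B⁆ := by
    simp only [Ring.lie_def, map_sub, map_mul]
  have hφ_commute {C : Matrix n n K} (hC : ⁅U₀, C⁆ = 0) : Commute (φ U₀) (φ C) := by
    rw [commute_iff_lie_eq, ← hφ_lie, hC, map_zero]
  have hφU : IsSpectralDecomposition (φ U₀) lam F := h
  set T : Module.End K (Matrix n n K) := LinearMap.mulLeft K U₀ - LinearMap.mulRight K U₀
  have hT (Y : Matrix n n K) : T Y = ⁅U₀, Y⁆ := (Ring.lie_def U₀ Y).symm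
  have hdisj : Disjoint (LinearMap.ker T) (LinearMap.range T) := by
    rw [Submodule.disjoint_def]
    rintro _ hX ⟨Y, rfl⟩
    refine map_injective (algebraMap K R).injective ?_
    calc φ (T Y) = pinching F (φ (T Y)) := (hφU.pinching_eq_self (hφ_commute hX)).symm
      _ = 0 := by rw [hT, hφ_lie, hφU.pinching_lie]
      _ = φ 0 := (map_zero φ).symm
  obtain ⟨C, hC, _, ⟨Y, rfl⟩, hX₀⟩ :=
    Submodule.mem_sup.mp ((LinearMap.isCompl_ker_range_of_disjoint hdisj).sup_eq_top ▸
      Submodule.mem_top (x := X₀))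
  refine ⟨C, ?_⟩
  calc pinching F (φ X₀) = pinching F (φ C) + pinching F ⁅φ U₀, φ Y⁆ := by
        rw [← hX₀, map_add, hT, hφ_lie, pinching_add]
    _ = φ C := by rw [hφU.pinching_eq_self (hφ_commute hC), hφU.pinching_lie, add_zero]

end IsSpectralDecomposition

end Matrix

lemma avgMix_apply_eq_pinching_single {ℓ m : ℕ} {F : Fin m → Matrix (Fin ℓ) (Fin ℓ) ℂ}
    (hF : ∀ r, (F r)ᴴ = F r) (i j : Fin ℓ) :
    avgMix F i j = pinching F (single j j 1) i i := by
  simp only [avgMix, pinching, Matrix.sum_apply, mul_single_one_mul_apply_same]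
  refine sum_congr rfl fun r _ ↦ ?_
  rw [hadamard_apply, map_apply, starRingEnd_apply, ← conjTranspose_apply, hF r]

theorem avgMix_rational_general (ℓ m : ℕ)
    (U : Matrix (Fin ℓ) (Fin ℓ) ℂ)
    (lam : Fin m → ℂ) (F : Fin m → Matrix (Fin ℓ) (Fin ℓ) ℂ)
    (hdist : Function.Injective lam)
    (hherm : ∀ r, (F r)ᴴ = F r)
    (hidem : ∀ r, F r * F r = F r)
    (horth : ∀ r s, r ≠ s → F r * F s = 0)
    (hsum : ∑ r, F r = 1)
    (hspec : U = ∑ r, lam r • F r)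
    (hrat : ∀ i j, ∃ q : ℚ, U i j = (q : ℂ)) :
    ∀ i j, ∃ q : ℚ, avgMix F i j = (q : ℂ) := by
  intro i j
  choose U₀ hU₀ using hrat
  have hU : U = (of U₀).map (algebraMap ℚ ℂ) := by ext a b; exact hU₀ a b
  have h : IsSpectralDecomposition ((of U₀).map (algebraMap ℚ ℂ)) lam F :=
    ⟨hdist, hidem, horth, hsum, hU ▸ hspec⟩
  obtain ⟨Y₀, hY₀⟩ := h.exists_pinching_map_eq_map (single j j 1)
  refine ⟨Y₀ i i, ?_⟩
  rw [avgMix_apply_eq_pinching_single hherm, ← map_one (algebraMap ℚ ℂ), ← map_single, hY₀,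
    map_apply, eq_ratCast]

/-- If every entry of U is rational, then every entry of M̂ is rational. -/
theorem avgMix_rational (ℓ m : ℕ) (hℓ : 0 < ℓ)
    (U : Matrix (Fin ℓ) (Fin ℓ) ℂ)
    (hU : U ∈ Matrix.unitaryGroup (Fin ℓ) ℂ)
    (lam : Fin m → ℂ) (F : Fin m → Matrix (Fin ℓ) (Fin ℓ) ℂ)
    (hdist : Function.Injective lam)
    (hmod : ∀ r, ‖lam r‖ = 1)
    (hherm : ∀ r, (F r)ᴴ = F r)
    (hidem : ∀ r, F r * F r = F r)
    (horth : ∀ r s, r ≠ s → F r * F s = 0)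
    (hsum : ∑ r, F r = 1)
    (hspec : U = ∑ r, lam r • F r)
    (hrat : ∀ i j, ∃ q : ℚ, U i j = (q : ℂ)) :
    ∀ i j, ∃ q : ℚ, avgMix F i j = (q : ℂ) :=
  avgMix_rational_general ℓ m U lam F hdist hherm hidem horth hsum hspec hrat
end
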